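/- Let n = p₁p₂p₃ be a product of three distinct primes with gcd(n,6) = 1 and n > 1000. Let G = ⟨g⟩ be cyclic of order n and S = (x₁g)·(x₂g)·(x₃g)·(x₄g) a minimal zero-sum sequence over G with 1 ≤ x_i ≤ n and {gcd(n,x₁), gcd(n,x₂), gcd(n,x₃), gcd(n,x₄)} = {p₁, p₂, p₁p₃, p₂p₃}. Then ind(S) = 1. -/

import Mathlib

/-- Canonical residue `|x|_n ∈ [1,n]` of `x` modulo `n`. -/
def resid (n x : ℕ) : ℕ := if x % n = 0 then n else x % n

/-- The set of coefficient sums of the sequence (given by its coefficient list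
w.r.t. a fixed generator of the cyclic group of order `n`) with respect to all
generators; a generator corresponds to a unit `w` mod `n`. -/
def indSums (n : ℕ) (S : List ℕ) : Set ℕ :=
  {m | ∃ w : ℕ, Nat.Coprime w n ∧ (S.map (fun x => resid n (w * x))).sum = m}

/-- The index of the sequence: the minimum over generators of the normalized
coefficient sum. -/
noncomputable def seqIndex (n : ℕ) (S : List ℕ) : ℚ :=
  ((sInf (indSums n S) : ℕ) : ℚ) / n

/-- `S` is a minimal zero-sum sequence over the cyclic group of order `n`
(terms encoded by their coefficients w.r.t. a fixed generator). -/
def MinZeroSum (n : ℕ) (S : List ℕ) : Prop :=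
  n ∣ S.sum ∧ ∀ T : List ℕ, List.Sublist T S → T ≠ [] → T ≠ S → ¬ n ∣ T.sum

/-! After reordering, the sequence is `p a, q b, p r c, q r d` with `n = p q r`. For a unit `w`
the coefficient sum `T w` is a multiple of `n` in `(0, 4n)`, and `T (-w) = 4n - T w`; so if the
index were not `1`, then `T w = 2n` for every unit `w`. Take units `w₁ ≡ w₂ (mod qr)` with
`w₂ ≡ -w₁ (mod p)`, `w₁ d ≡ 1 (mod p)` and `w₁ b ≡ p (r - 1) / 2 (mod r)`. The `a`- and
`c`-terms of `T w₁` and `T w₂` agree, and equality of the remaining terms would make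
`F = |w₁ b|_{pr} + r = |w₂ b|_{pr} + (p - 1) r` a multiple of `p` in `(pr - r, pr + r]` that is
congruent to `p (r - 1) / 2` modulo `r`; there is no such number. -/

section resid

variable {n x y : ℕ}

theorem resid_pos (hn : 0 < n) : 0 < resid n x := by
  unfold resid; split <;> omega

theorem resid_le (hn : 0 < n) : resid n x ≤ n := by
  unfold resid; split
  · exact le_rfl
  · exact (Nat.mod_lt _ hn).le

theorem resid_modEq : resid n x ≡ x [MOD n] := by
  unfold resid Nat.ModEq; split <;> simp_all

theorem resid_congr (h : x ≡ y [MOD n]) : resid n x = resid n y := by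
  unfold resid; rw [h]

theorem resid_eq_self_of_pos_of_lt (hx : 0 < x) (h : x < n) : resid n x = x := by
  unfold resid; rw [Nat.mod_eq_of_lt h]; simp [hx.ne']

theorem resid_eq_self_iff_dvd : resid n x = n ↔ n ∣ x := by
  unfold resid; split
  · simp_all [Nat.dvd_iff_mod_eq_zero]
  · rcases Nat.eq_zero_or_pos n with rfl | hn
    · simp_all
    · have := Nat.mod_lt x hn
      simp_all [Nat.dvd_iff_mod_eq_zero]; omega

theorem resid_mul_mul_left {m : ℕ} (hm : 0 < m) (k x : ℕ) :
    resid (m * k) (m * x) = m * resid k x := by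
  unfold resid; rw [Nat.mul_mod_mul_left]
  split_ifs <;> simp_all [hm.ne']

theorem resid_add_resid_of_dvd_add (hxy : n ∣ x + y) (hx : ¬ n ∣ x) :
    resid n x + resid n y = n := by
  have hy : ¬ n ∣ y := fun hy => hx ((Nat.dvd_add_left hy).mp hxy)
  rw [Nat.dvd_iff_mod_eq_zero] at hx hy hxy
  have hn : 0 < n := Nat.pos_of_ne_zero (by rintro rfl; simp_all)
  have := Nat.mod_lt x hn
  have := Nat.mod_lt y hn
  rw [Nat.add_mod] at hxy
  unfold resid; simp only [hx, hy, if_false]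
  rcases Nat.lt_or_ge (x % n + y % n) n with h | h
  · rw [Nat.mod_eq_of_lt h] at hxy; omega
  · rw [Nat.mod_eq_sub_mod h, Nat.mod_eq_of_lt (by omega)] at hxy; omega

end resid

section indSums

variable {n m : ℕ} {S : List ℕ}

theorem sum_map_resid_modEq (n w : ℕ) (S : List ℕ) :
    (S.map fun x => resid n (w * x)).sum ≡ w * S.sum [MOD n] := by
  induction S with
  | nil => simp [Nat.ModEq.refl]
  | cons x S ih =>
    rw [List.map_cons, List.sum_cons, List.sum_cons, mul_add]
    exact resid_modEq.add ih

theorem dvd_of_mem_indSums (hS : n ∣ S.sum) (hm : m ∈ indSums n S) : n ∣ m := by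
  obtain ⟨w, -, rfl⟩ := hm
  exact (Nat.modEq_zero_iff_dvd.mp ((sum_map_resid_modEq n w S).trans
    (Nat.modEq_zero_iff_dvd.mpr (hS.mul_left w))))

theorem length_le_of_mem_indSums (hn : 0 < n) (hm : m ∈ indSums n S) : S.length ≤ m := by
  obtain ⟨w, -, rfl⟩ := hm
  simpa using List.length_le_sum_of_one_le (S.map fun x => resid n (w * x))
    (List.forall_mem_map.mpr fun _ _ => resid_pos hn)

theorem not_dvd_mul_of_coprime {w x : ℕ} (hw : w.Coprime n) (hx : ¬ n ∣ x) : ¬ n ∣ w * x :=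
  fun h => hx (hw.symm.dvd_of_dvd_mul_left h)

theorem lt_of_mem_indSums (hn : 0 < n) (hS : ∀ x ∈ S, ¬ n ∣ x) (hne : S ≠ [])
    (hm : m ∈ indSums n S) : m < S.length * n := by
  obtain ⟨w, hw, rfl⟩ := hm
  have hle : ∀ x ∈ S, resid n (w * x) ≤ n - 1 := fun x hx => by
    have := (resid_le (x := w * x) hn).lt_of_ne
      (mt resid_eq_self_iff_dvd.mp (not_dvd_mul_of_coprime hw (hS x hx)))
    omega
  calc (S.map fun x => resid n (w * x)).sum ≤ S.length * (n - 1) := by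
        simpa using List.sum_le_card_nsmul _ (n - 1) (List.forall_mem_map.mpr hle)
    _ < S.length * n := Nat.mul_lt_mul_of_pos_left (by omega) (List.length_pos_iff.mpr hne)

theorem sub_mem_indSums (hn : 0 < n) (hS : ∀ x ∈ S, ¬ n ∣ x) (hm : m ∈ indSums n S) :
    S.length * n - m ∈ indSums n S := by
  obtain ⟨w, hw, rfl⟩ := hm
  have hw' : ((n - 1) * w).Coprime n :=
    ((Nat.coprime_self_sub_left hn).mpr (Nat.coprime_one_left n)).mul_left hw
  have hcompl : ∀ x ∈ S, resid n ((n - 1) * w * x) + resid n (w * x) = n := fun x hx =>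
    resid_add_resid_of_dvd_add ⟨w * x, by
      rw [mul_assoc, ← add_one_mul, Nat.sub_one_add_one hn.ne']⟩
      (not_dvd_mul_of_coprime hw' (hS x hx))
  refine ⟨(n - 1) * w, hw', ?_⟩
  have := List.sum_map_add (l := S) (f := fun x => resid n ((n - 1) * w * x))
    (g := fun x => resid n (w * x))
  rw [List.map_congr_left hcompl, List.map_const', List.sum_replicate, smul_eq_mul] at this
  omega

theorem seqIndex_eq_one_of_mem (hn : 0 < n) (hne : S ≠ []) (hS : n ∣ S.sum)
    (h : n ∈ indSums n S) : seqIndex n S = 1 := by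
  have hlen : 0 < S.length := List.length_pos_iff.mpr hne
  have hInf : sInf (indSums n S) = n :=
    le_antisymm (Nat.sInf_le h) (le_csInf ⟨n, h⟩ fun m hm =>
      Nat.le_of_dvd (hlen.trans_le (length_le_of_mem_indSums hn hm)) (dvd_of_mem_indSums hS hm))
  rw [seqIndex, hInf, div_self (by exact_mod_cast hn.ne')]

theorem seqIndex_perm {S' : List ℕ} (h : S.Perm S') : seqIndex n S = seqIndex n S' := by
  have : indSums n S = indSums n S' := by
    ext m; simp only [indSums, Set.mem_ofPred_eq, (h.map _).sum_eq]
  rw [seqIndex, seqIndex, this]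

end indSums

theorem notMem_Ioc_of_dvd_of_modEq {p r h F : ℕ} (hpr : p.Coprime r) (hh : 2 * h + 1 = r)
    (hph : r < p * h) (hF : F ≡ p * h [MOD r]) (hpF : p ∣ F) :
    F ∉ Set.Ioc (p * r - r) (p * r + r) := by
  obtain ⟨κ, rfl⟩ := hpF
  have hκ : κ % r = h := by
    rw [Nat.ModEq.cancel_left_of_coprime (Nat.Coprime.gcd_eq_one hpr.symm) hF,
      Nat.mod_eq_of_lt (by omega)]
  have hdiv := Nat.div_add_mod κ r
  rw [hκ] at hdiv
  have hp : 1 < p := Nat.lt_of_mul_lt_mul_right (a := h) (by omega)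
  rintro ⟨hlo, hhi⟩
  rcases Nat.eq_zero_or_pos (κ / r) with hq | hq
  · obtain rfl : κ = h := by rw [hq] at hdiv; omega
    have : p * r = 2 * (p * κ) + p := by rw [← hh]; ring
    have : 2 * κ ≤ p * κ := Nat.mul_le_mul_right κ hp
    omega
  · have : p * (r + h) ≤ p * κ := Nat.mul_le_mul_left p (by nlinarith)
    nlinarith

theorem resid_add_mul_resid_ne {p r h b d w₁ w₂ : ℕ} (hpr : p.Coprime r) (hp : Odd p)
    (hh : 2 * h + 1 = r) (hph : r < p * h) (hpw : p ∣ w₁ + w₂) (hd : w₁ * d ≡ 1 [MOD p])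
    (hb : w₁ * b ≡ p * h [MOD r]) :
    resid (p * r) (w₁ * b) + r * resid p (w₁ * d) ≠
      resid (p * r) (w₂ * b) + r * resid p (w₂ * d) := by
  intro hF
  set F := resid (p * r) (w₁ * b) + r * resid p (w₁ * d)
  have hp1 : 1 < p := Nat.lt_of_mul_lt_mul_right (a := h) (by omega)
  have hδ₁ : resid p (w₁ * d) = 1 :=
    (resid_congr hd).trans (resid_eq_self_of_pos_of_lt one_pos hp1)
  have hδ₂ : resid p (w₂ * d) = p - 1 := by
    have hndvd : ¬ p ∣ w₁ * d := fun hdvd => hp1.ne' (Nat.dvd_one.mp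
      (Nat.modEq_zero_iff_dvd.mp (hd.symm.trans (Nat.modEq_zero_iff_dvd.mpr hdvd))))
    have := resid_add_resid_of_dvd_add (by rw [← add_mul]; exact hpw.mul_right d) hndvd
    omega
  have hFr : F ≡ p * h [MOD r] := calc
    F ≡ w₁ * b + 0 [MOD r] := resid_modEq.of_mul_left p |>.add
        (Nat.modEq_zero_iff_dvd.mpr (dvd_mul_right r _))
    _ ≡ p * h [MOD r] := hb
  have hFp : p ∣ F := by
    have : F + F ≡ 0 [MOD p] := calc
      F + F = resid (p * r) (w₁ * b) + r * resid p (w₁ * d) +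
          (resid (p * r) (w₂ * b) + r * resid p (w₂ * d)) := by rw [← hF]
      _ ≡ w₁ * b + r * (w₁ * d) + (w₂ * b + r * (w₂ * d)) [MOD p] := by
        gcongr <;> first | exact resid_modEq.of_mul_right r | exact resid_modEq
      _ = (w₁ + w₂) * (b + r * d) := by ring
      _ ≡ 0 [MOD p] := Nat.modEq_zero_iff_dvd.mpr (hpw.mul_right _)
    rw [← two_mul] at this
    exact hp.coprime_two_right.dvd_of_dvd_mul_left (Nat.modEq_zero_iff_dvd.mp this)
  refine notMem_Ioc_of_dvd_of_modEq hpr hh hph hFr hFp ⟨?_, ?_⟩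
  · have := resid_pos (x := w₂ * b) (Nat.mul_pos (by omega) (by omega) : 0 < p * r)
    have : r * (p - 1) = p * r - r := by rw [Nat.mul_sub_one, mul_comm]
    rw [hF, hδ₂]
    omega
  · have := resid_le (x := w₁ * b) (Nat.mul_pos (by omega) (by omega) : 0 < p * r)
    simp only [F, hδ₁]
    omega

theorem coprime_of_modEq {a b m : ℕ} (h : a ≡ b [MOD m]) (hb : b.Coprime m) :
    a.Coprime m := by
  rwa [Nat.Coprime, h.gcd_eq]

theorem exists_coprime_pair_modEq {p q r b d h : ℕ} (hpq : p.Coprime q) (hpr : p.Coprime r)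
    (hqr : q.Coprime r) (hp : 1 < p) (hr : 1 < r) (hb : b.Coprime r) (hd : d.Coprime p)
    (hh : h.Coprime r) :
    ∃ w₁ w₂, w₁.Coprime (p * q * r) ∧ w₂.Coprime (p * q * r) ∧ w₁ ≡ w₂ [MOD q * r] ∧
      p ∣ w₁ + w₂ ∧ w₁ * d ≡ 1 [MOD p] ∧ w₁ * b ≡ p * h [MOD r] := by
  obtain ⟨d', -, hd'⟩ := Nat.exists_mul_mod_eq_one_of_coprime hd hp
  obtain ⟨b', -, hb'⟩ := Nat.exists_mul_mod_eq_one_of_coprime hb hr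
  obtain ⟨v, hvq, hvr⟩ := Nat.chineseRemainder hqr 1 (b' * (p * h))
  have hpqr : p.Coprime (q * r) := hpq.mul_right hpr
  obtain ⟨w₁, hw₁p, hw₁qr⟩ := Nat.chineseRemainder hpqr d' v
  obtain ⟨w₂, hw₂p, hw₂qr⟩ := Nat.chineseRemainder hpqr ((p - 1) * w₁) w₁
  have hw₁d : w₁ * d ≡ 1 [MOD p] := calc
    w₁ * d ≡ d * d' [MOD p] := by rw [mul_comm d]; exact hw₁p.mul_right d
    _ ≡ 1 [MOD p] := by rw [Nat.ModEq, hd', Nat.mod_eq_of_lt hp]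
  have hw₁b : w₁ * b ≡ p * h [MOD r] := calc
    w₁ * b ≡ b' * (p * h) * b [MOD r] := ((hw₁qr.of_mul_left q).trans hvr).mul_right b
    _ = b * b' * (p * h) := by ring
    _ ≡ 1 * (p * h) [MOD r] :=
      Nat.ModEq.mul_right _ (by rw [Nat.ModEq, hb', Nat.mod_eq_of_lt hr])
    _ = p * h := one_mul _
  have hw₁ : w₁.Coprime (p * (q * r)) := by
    refine (Nat.coprime_of_mul_modEq_one d hw₁d).mul_right (Nat.Coprime.mul_right ?_ ?_)
    · exact coprime_of_modEq ((hw₁qr.of_mul_right r).trans hvq) (Nat.coprime_one_left q)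
    · exact (coprime_of_modEq hw₁b (hpr.mul_left hh)).coprime_mul_right
  have hw₂ : w₂.Coprime (p * (q * r)) := by
    refine (coprime_of_modEq hw₂p ?_).mul_right (coprime_of_modEq hw₂qr hw₁.coprime_mul_left_right)
    exact ((Nat.coprime_self_sub_left hp.le).mpr (Nat.coprime_one_left p)).mul_left
      hw₁.coprime_mul_right_right
  refine ⟨w₁, w₂, by rwa [mul_assoc], by rwa [mul_assoc], hw₂qr.symm, ?_, hw₁d, hw₁b⟩
  refine Nat.modEq_zero_iff_dvd.mp ?_
  calc w₁ + w₂ ≡ w₁ + (p - 1) * w₁ [MOD p] := Nat.ModEq.add_left _ hw₂p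
    _ = p * w₁ := by rw [← one_add_mul, Nat.add_sub_cancel' hp.le]
    _ ≡ 0 [MOD p] := Nat.modEq_zero_iff_dvd.mpr (dvd_mul_right p w₁)

theorem not_subsingleton_indSums {p q r a b c d : ℕ} (hpq : p.Coprime q) (hpr : p.Coprime r)
    (hqr : q.Coprime r) (hp : Odd p) (hp5 : 5 ≤ p) (hr : Odd r) (hr3 : 3 ≤ r)
    (hb : b.Coprime r) (hd : d.Coprime p) :
    ¬ (indSums (p * q * r) [p * a, q * b, p * r * c, q * r * d]).Subsingleton := by
  obtain ⟨h, hh⟩ : ∃ h, 2 * h + 1 = r := ⟨r / 2, by have := Nat.odd_iff.mp hr; omega⟩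
  have hph : r < p * h := by nlinarith
  have hhr : h.Coprime r := by rw [← hh]; simp
  obtain ⟨w₁, w₂, hw₁, hw₂, hw, hpw, hw₁d, hw₁b⟩ :=
    exists_coprime_pair_modEq hpq hpr hqr (by omega) (by omega) hb hd hhr
  have hq : 0 < q := Nat.pos_of_ne_zero fun hq0 => by
    rw [hq0, Nat.coprime_zero_right] at hpq; omega
  have expand : ∀ w,
      ([p * a, q * b, p * r * c, q * r * d].map fun x => resid (p * q * r) (w * x)).sum =
        p * resid (q * r) (w * a) + p * r * resid q (w * c) +
        q * (resid (p * r) (w * b) + r * resid p (w * d)) := fun w => by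
    have factor : ∀ {m k x y}, 0 < m → p * q * r = m * k → w * x = m * y →
        resid (p * q * r) (w * x) = m * resid k y := fun hm hn hx => by
      rw [hn, hx, resid_mul_mul_left hm]
    simp only [List.map_cons, List.map_nil, List.sum_cons, List.sum_nil]
    rw [factor (m := p) (k := q * r) (y := w * a) (by omega) (by ring) (by ring),
      factor (m := q) (k := p * r) (y := w * b) hq (by ring) (by ring),
      factor (m := p * r) (k := q) (y := w * c) (by positivity) (by ring) (by ring),
      factor (m := q * r) (k := p) (y := w * d) (by positivity) (by ring) (by ring)]
    ring
  intro hsub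
  have hT := hsub ⟨w₁, hw₁, rfl⟩ ⟨w₂, hw₂, rfl⟩
  rw [expand, expand, resid_congr (hw.mul_right a), resid_congr ((hw.of_mul_right r).mul_right c)]
    at hT
  exact resid_add_mul_resid_ne hpr hp hh hph hpw hw₁d hw₁b
    (Nat.eq_of_mul_eq_mul_left hq (by omega))

theorem coprime_of_gcd_mul_mul_eq {m k x : ℕ} (hm : 0 < m) (h : Nat.gcd (m * k) (m * x) = m) :
    k.Coprime x := by
  rwa [Nat.gcd_mul_left, Nat.mul_eq_left hm.ne'] at h

theorem seqIndex_eq_one_of_gcd_eq {p q r y₁ y₂ y₃ y₄ : ℕ} (hp : p.Prime) (hq : q.Prime)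
    (hr : r.Prime) (hpq : p ≠ q) (hpr : p ≠ r) (hqr : q ≠ r) (hp5 : 5 ≤ p) (hr3 : 3 ≤ r)
    (hsum : p * q * r ∣ [y₁, y₂, y₃, y₄].sum)
    (h₁ : Nat.gcd (p * q * r) y₁ = p) (h₂ : Nat.gcd (p * q * r) y₂ = q)
    (h₃ : Nat.gcd (p * q * r) y₃ = p * r) (h₄ : Nat.gcd (p * q * r) y₄ = q * r) :
    seqIndex (p * q * r) [y₁, y₂, y₃, y₄] = 1 := by
  have hp1 := hp.one_lt
  have hq1 := hq.one_lt
  have hn : 0 < p * q * r := by positivity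
  have hndvd : ∀ y ∈ [y₁, y₂, y₃, y₄], ¬ p * q * r ∣ y := by
    intro y hy hdvd
    have := Nat.gcd_eq_left hdvd
    simp only [List.mem_cons, List.not_mem_nil, or_false] at hy
    rcases hy with rfl | rfl | rfl | rfl <;> nlinarith
  refine seqIndex_eq_one_of_mem hn (List.cons_ne_nil _ _) hsum (by_contra fun hnot => ?_)
  have htwo : ∀ m ∈ indSums (p * q * r) [y₁, y₂, y₃, y₄], m = 2 * (p * q * r) := by
    intro m hm
    have h3 : m ≠ 3 * (p * q * r) := fun h3 => hnot (by
      simpa [h3, ← Nat.sub_mul] using sub_mem_indSums hn hndvd hm)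
    obtain ⟨k, rfl⟩ := dvd_of_mem_indSums hsum hm
    have hlo := length_le_of_mem_indSums hn hm
    have hhi := lt_of_mem_indSums hn hndvd (List.cons_ne_nil _ _) hm
    simp only [List.length_cons, List.length_nil] at hlo hhi
    have hk : k < 4 := by nlinarith
    interval_cases k
    · omega
    · exact absurd (by simpa using hm) hnot
    · ring
    · exact absurd (by ring) h3
  obtain ⟨a, rfl⟩ : p ∣ y₁ := h₁ ▸ Nat.gcd_dvd_right _ _
  obtain ⟨b, rfl⟩ : q ∣ y₂ := h₂ ▸ Nat.gcd_dvd_right _ _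
  obtain ⟨c, rfl⟩ : p * r ∣ y₃ := h₃ ▸ Nat.gcd_dvd_right _ _
  obtain ⟨d, rfl⟩ : q * r ∣ y₄ := h₄ ▸ Nat.gcd_dvd_right _ _
  have hb : b.Coprime r := by
    rw [show p * q * r = q * (p * r) by ring] at h₂
    exact (coprime_of_gcd_mul_mul_eq (by omega) h₂).coprime_mul_left.symm
  have hd : d.Coprime p := by
    rw [show p * q * r = q * r * p by ring] at h₄
    exact (coprime_of_gcd_mul_mul_eq (by positivity) h₄).symm
  exact not_subsingleton_indSums ((Nat.coprime_primes hp hq).mpr hpq)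
    ((Nat.coprime_primes hp hr).mpr hpr) ((Nat.coprime_primes hq hr).mpr hqr)
    (hp.odd_of_ne_two (by omega)) hp5 (hr.odd_of_ne_two (by omega)) hr3 hb hd
    fun m₁ hm₁ m₂ hm₂ => (htwo m₁ hm₁).trans (htwo m₂ hm₂).symm

theorem List.exists_perm_map_eq {α β : Type*} (f : α → β) {L : List α} {M : List β}
    (hM : M.Nodup) (hlen : L.length ≤ M.length) (hsurj : ∀ b ∈ M, ∃ a ∈ L, f a = b) :
    ∃ L' : List α, L'.Perm L ∧ L'.map f = M := by
  choose g hgL hgf using hsurj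
  have hmap : (M.attach.map fun b => g b.1 b.2).map f = M := by
    rw [List.map_map]
    exact (List.map_congr_left fun b _ => hgf b.1 b.2).trans M.attach_map_subtype_val
  refine ⟨_, ((hmap ▸ hM).of_map f |>.subperm ?_).perm_of_length_le (by simpa using hlen), hmap⟩
  intro a ha
  obtain ⟨b, -, rfl⟩ := List.mem_map.mp ha
  exact hgL b.1 b.2

theorem Nat.Prime.five_le_of_dvd_of_coprime_six {p n : ℕ} (hp : p.Prime) (hpn : p ∣ n)
    (hn : n.Coprime 6) : 5 ≤ p := by
  have hc := Nat.Coprime.coprime_dvd_left hpn hn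
  have := hp.two_le
  by_contra!
  interval_cases p <;> simp_all +decide

theorem nodup_primes_mul {p q r : ℕ} (hp : p.Prime) (hq : q.Prime) (hr : r.Prime)
    (hpq : p ≠ q) :
    [p, q, p * r, q * r].Nodup := by
  have hr1 : r ≠ 1 := hr.one_lt.ne'
  simp only [List.nodup_cons, List.mem_cons, List.not_mem_nil, or_false, not_or,
    Nat.mul_left_inj hr.ne_zero, List.nodup_nil, not_false_eq_true, and_true]
  refine ⟨⟨hpq, ?_, ?_⟩, ⟨?_, ?_⟩, hpq⟩
  · exact fun h => hr1 ((Nat.mul_eq_left hp.ne_zero).mp h.symm)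
  · rintro rfl; exact Nat.not_prime_mul hq.one_lt.ne' hr1 hp
  · rintro rfl; exact Nat.not_prime_mul hp.one_lt.ne' hr1 hq
  · exact fun h => hr1 ((Nat.mul_eq_left hq.ne_zero).mp h.symm)

theorem main_theorem_general (p₁ p₂ p₃ n x₁ x₂ x₃ x₄ : ℕ)
    (hp₁ : p₁.Prime) (hp₂ : p₂.Prime) (hp₃ : p₃.Prime)
    (h12 : p₁ ≠ p₂) (h13 : p₁ ≠ p₃) (h23 : p₂ ≠ p₃)
    (hn : n = p₁ * p₂ * p₃) (hn6 : Nat.Coprime n 6)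
    (hmin : MinZeroSum n [x₁, x₂, x₃, x₄])
    (hgcds : ({Nat.gcd n x₁, Nat.gcd n x₂, Nat.gcd n x₃, Nat.gcd n x₄} : Set ℕ) =
      {p₁, p₂, p₁ * p₃, p₂ * p₃}) :
    seqIndex n [x₁, x₂, x₃, x₄] = 1 := by
  have hp₁5 := hp₁.five_le_of_dvd_of_coprime_six (hn ▸ ⟨p₂ * p₃, by ring⟩) hn6
  have hp₃5 := hp₃.five_le_of_dvd_of_coprime_six (hn ▸ ⟨p₁ * p₂, by ring⟩) hn6
  obtain ⟨Y, hperm, hY⟩ := List.exists_perm_map_eq (Nat.gcd n) (L := [x₁, x₂, x₃, x₄])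
      (nodup_primes_mul hp₁ hp₂ hp₃ h12) (by simp) fun b hb => by
    have : b ∈ ({Nat.gcd n x₁, Nat.gcd n x₂, Nat.gcd n x₃, Nat.gcd n x₄} : Set ℕ) := by
      rw [hgcds]; simpa using hb
    simpa [eq_comm] using this
  obtain ⟨y₁, y₂, y₃, y₄, rfl⟩ := List.length_eq_four.mp (by simpa using congrArg List.length hY)
  simp only [List.map_cons, List.map_nil, List.cons.injEq, and_true] at hY
  obtain ⟨h₁, h₂, h₃, h₄⟩ := hY
  rw [← seqIndex_perm hperm]
  subst hn
  exact seqIndex_eq_one_of_gcd_eq hp₁ hp₂ hp₃ h12 h13 h23 hp₁5 (by omega)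
    (hperm.sum_eq ▸ hmin.1) h₁ h₂ h₃ h₄

theorem main_theorem (p₁ p₂ p₃ n x₁ x₂ x₃ x₄ : ℕ)
    (hp₁ : p₁.Prime) (hp₂ : p₂.Prime) (hp₃ : p₃.Prime)
    (h12 : p₁ ≠ p₂) (h13 : p₁ ≠ p₃) (h23 : p₂ ≠ p₃)
    (hn : n = p₁ * p₂ * p₃) (hn6 : Nat.Coprime n 6) (hn1000 : 1000 < n)
    (hx : ∀ x ∈ [x₁, x₂, x₃, x₄], 1 ≤ x ∧ x ≤ n)
    (hmin : MinZeroSum n [x₁, x₂, x₃, x₄])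
    (hgcds : ({Nat.gcd n x₁, Nat.gcd n x₂, Nat.gcd n x₃, Nat.gcd n x₄} : Set ℕ) =
      {p₁, p₂, p₁ * p₃, p₂ * p₃}) :
    seqIndex n [x₁, x₂, x₃, x₄] = 1 :=
  main_theorem_general p₁ p₂ p₃ n x₁ x₂ x₃ x₄ hp₁ hp₂ hp₃ h12 h13 h23 hn hn6 hmin hgcds
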